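/- There exists a constant such that for all n ≥ 2 there is a graph on n vertices with no clique and no independent set of size greater than 2·log₂ n. -/

import Mathlib

/-!
Erdős's counting argument. Colour the pairs of vertices red/blue: a fixed `t`-set is monochromatic
for a `2 ^ (1 - C(t, 2))` fraction of the colourings, so if `2 * C(n, t) < 2 ^ C(t, 2)` some
colouring has no monochromatic `t`-set, and its red graph has no clique or independent set of
size `t`. With `t = ⌊log₂ n²⌋ + 1` one has `n² < 2 ^ t`, and this suffices because
`C(n, t) ≤ n ^ t / t! < 2 ^ (t² / 2) / t!` and `t! ≥ 2 ^ (1 + t / 2)`.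
-/

open Finset Fintype

namespace Nat

theorem two_pow_add_two_le_factorial_sq {t : ℕ} (ht : 3 ≤ t) : 2 ^ (t + 2) ≤ t ! ^ 2 := by
  induction t, ht using Nat.le_induction with
  | base => decide
  | succ t ht ih =>
    calc 2 ^ (t + 1 + 2) = 2 * 2 ^ (t + 2) := by ring
      _ ≤ (t + 1) ^ 2 * t ! ^ 2 := by gcongr; nlinarith
      _ = (t + 1)! ^ 2 := by rw [factorial_succ]; ring

theorem two_mul_choose_two_add_self (t : ℕ) : 2 * t.choose 2 + t = t ^ 2 := by
  rw [Nat.choose_two_right, Nat.two_mul_div_two_of_even (Nat.even_mul_pred_self t)]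
  cases t with
  | zero => rfl
  | succ t => simp only [Nat.add_sub_cancel]; ring

theorem two_mul_choose_lt_two_pow_choose_two {n t : ℕ} (ht : 3 ≤ t) (hn : n ^ 2 < 2 ^ t) :
    2 * n.choose t < 2 ^ t.choose 2 := by
  -- squared, so that the exponent `t² / 2` becomes an integer
  suffices (2 * n.choose t * t !) ^ 2 < (2 ^ t.choose 2 * t !) ^ 2 from
    Nat.lt_of_mul_lt_mul_right (lt_of_pow_lt_pow_left₀ 2 (Nat.zero_le _) this)
  calc (2 * n.choose t * t !) ^ 2 = 4 * (t ! * n.choose t) ^ 2 := by ring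
    _ ≤ 4 * (n ^ t) ^ 2 := by
      rw [← descFactorial_eq_factorial_mul_choose]
      gcongr
      exact descFactorial_le_pow n t
    _ = 4 * (n ^ 2) ^ t := by ring
    _ < 4 * (2 ^ t) ^ t := by gcongr
    _ = 2 ^ (2 * t.choose 2) * 2 ^ (t + 2) := by
      rw [← pow_mul, ← pow_add, ← add_assoc, two_mul_choose_two_add_self]; ring
    _ ≤ 2 ^ (2 * t.choose 2) * t ! ^ 2 :=
      Nat.mul_le_mul_left _ (two_pow_add_two_le_factorial_sq ht)
    _ = (2 ^ t.choose 2 * t !) ^ 2 := by ring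

end Nat

section Coloring

variable {α β : Type*} [Fintype α] [DecidableEq α] [Fintype β]

theorem card_piFinset_ite_mem_singleton_univ (A : Finset α) (b : β) :
    #(piFinset fun x => if x ∈ A then {b} else univ) = card β ^ #Aᶜ := by
  simp [apply_ite Finset.card, Finset.prod_ite, Finset.filter_not, Finset.compl_eq_univ_sdiff]

theorem exists_forall_exists_ne_of_card_mul_lt [DecidableEq β] [Nonempty β] {ι : Type*}
    (S : Finset ι) (A : ι → Finset α) {k : ℕ} (hA : ∀ i ∈ S, k ≤ #(A i))
    (hS : #S * card β < card β ^ k) :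
    ∃ f : α → β, ∀ i ∈ S, ∀ b, ∃ x ∈ A i, f x ≠ b := by
  set monochromatic := S.biUnion fun i => univ.biUnion fun b : β =>
    piFinset fun x => if x ∈ A i then {b} else univ
  have hcard : #monochromatic * card β ^ k < card (α → β) * card β ^ k := calc
    #monochromatic * card β ^ k
      ≤ ∑ i ∈ S, ∑ b : β, card β ^ #(A i)ᶜ * card β ^ k := by
        grw [card_biUnion_le, sum_mul]
        gcongr with i
        grw [card_biUnion_le, sum_mul]
        simp only [card_piFinset_ite_mem_singleton_univ, le_refl]
    _ ≤ ∑ i ∈ S, ∑ b : β, card β ^ card α := by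
        gcongr with i hi
        rw [← card_compl_add_card (A i), pow_add]
        gcongr
        · exact card_pos
        · exact hA i hi
    _ = card β ^ card α * (#S * card β) := by simp only [sum_const, card_univ, smul_eq_mul]; ring
    _ < card (α → β) * card β ^ k := by
        rw [card_fun]
        gcongr
  obtain ⟨f, -, hf⟩ := exists_mem_notMem_of_card_lt_card
    ((Nat.lt_of_mul_lt_mul_right hcard).trans_eq card_univ.symm)
  refine ⟨f, fun i hi b => ?_⟩
  simp only [monochromatic, mem_biUnion, mem_univ, true_and, Fintype.mem_piFinset, not_exists,
    not_and] at hf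
  obtain ⟨x, hx⟩ := not_forall.1 (hf i hi b)
  by_cases hxA : x ∈ A i
  · exact ⟨x, hxA, by simpa [hxA] using hx⟩
  · simp [hxA] at hx

end Coloring

namespace SimpleGraph

variable {V : Type*} {G : SimpleGraph V} {n : ℕ} {s : Finset V}

theorem CliqueFree.card_lt_of_isClique (hG : G.CliqueFree n) (hs : G.IsClique s) : #s < n := by
  by_contra! h
  obtain ⟨u, hus, rfl⟩ := exists_subset_card_eq h
  exact hG u ⟨hs.subset hus, rfl⟩

theorem IndepSetFree.card_lt_of_isIndepSet (hG : G.IndepSetFree n) (hs : G.IsIndepSet s) :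
    #s < n :=
  CliqueFree.card_lt_of_isClique ((cliqueFree_compl G).2 hG) ((isClique_compl G).2 hs)

theorem exists_cliqueFree_indepSetFree [Fintype V] [DecidableEq V] {t : ℕ}
    (h : 2 * (card V).choose t < 2 ^ t.choose 2) :
    ∃ G : SimpleGraph V, G.CliqueFree t ∧ G.IndepSetFree t := by
  obtain ⟨f, hf⟩ := exists_forall_exists_ne_of_card_mul_lt (β := Bool) (univ.powersetCard t)
    (fun s : Finset V => s.offDiag.image Sym2.mk.uncurry) (k := t.choose 2)
    (fun s hs => by rw [Sym2.card_image_offDiag, (mem_powersetCard.1 hs).2])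
    (by simpa [mul_comm] using h)
  have hpair : ∀ s : Finset V, #s = t → ∀ b, ∃ x ∈ s, ∃ y ∈ s, x ≠ y ∧ f s(x, y) ≠ b := by
    intro s hs b
    obtain ⟨e, he, hfe⟩ := hf s (mem_powersetCard.2 ⟨subset_univ s, hs⟩) b
    obtain ⟨⟨x, y⟩, hxy, rfl⟩ := mem_image.1 he
    obtain ⟨hx, hy, hne⟩ := mem_offDiag.1 hxy
    exact ⟨x, hx, y, hy, hne, hfe⟩
  refine ⟨fromEdgeSet {e | f e}, fun s hs => ?_, fun s hs => ?_⟩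
  · obtain ⟨x, hx, y, hy, hne, hfxy⟩ := hpair s hs.2 true
    exact hfxy ((fromEdgeSet_adj _).1 (hs.1 hx hy hne)).1
  · obtain ⟨x, hx, y, hy, hne, hfxy⟩ := hpair s hs.2 false
    exact hfxy (by simpa [hne] using hs.1 hx hy hne)

end SimpleGraph

/-- For every `n ≥ 2` there is a graph on `n` vertices with no clique and no
independent set of size greater than `2·log₂ n`. -/
theorem exists_ramsey_graph :
    ∀ n : ℕ, 2 ≤ n → ∃ G : SimpleGraph (Fin n),
      ∀ s : Finset (Fin n),
        ((s : Set (Fin n)).Pairwise G.Adj ∨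
         (s : Set (Fin n)).Pairwise (fun a b => ¬ G.Adj a b)) →
        (s.card : ℝ) ≤ 2 * Real.logb 2 (n : ℝ) := by
  intro n hn
  set t := Nat.log 2 (n ^ 2) + 1
  have ht : 3 ≤ t := by
    have : 2 ≤ Nat.log 2 (n ^ 2) := Nat.le_log_of_pow_le one_lt_two (Nat.pow_le_pow_left hn 2)
    omega
  have hchoose : 2 * n.choose t < 2 ^ t.choose 2 :=
    Nat.two_mul_choose_lt_two_pow_choose_two ht (Nat.lt_pow_succ_log_self one_lt_two _)
  obtain ⟨G, hclique, hindep⟩ :=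
    SimpleGraph.exists_cliqueFree_indepSetFree (V := Fin n) (by simpa using hchoose)
  refine ⟨G, fun s hs => ?_⟩
  have hst : #s < t := hs.elim hclique.card_lt_of_isClique hindep.card_lt_of_isIndepSet
  calc (#s : ℝ) ≤ Nat.log 2 (n ^ 2) := by exact_mod_cast Nat.lt_succ_iff.1 hst
    _ ≤ Real.logb 2 (n ^ 2 : ℕ) := by exact_mod_cast Real.natLog_le_logb _ _
    _ = 2 * Real.logb 2 n := by push_cast; rw [Real.logb_pow]; norm_num
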